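/- Let B ∈ ℝ³ with ‖B‖ = b > 0, let n = B/b, let ε > 0 and v₀ ∈ ℝ³. Define v : ℝ → ℝ³ by v(t) = cos(b t/ε) v₀ + (1 − cos(b t/ε)) ⟨n, v₀⟩ n + sin(b t/ε) (v₀ × n). Then v(0) = v₀ and, for every t ∈ ℝ, v is differentiable at t with v'(t) = (1/ε) (v(t) × B). (Rodrigues' formula for the characteristics of the stiff part of the Vlasov equation; the position component x(t) = x(0) is constant.) -/

import Mathlib

/-!
Rodrigues' formula `R θ` rotates `v₀` about the unit axis `n`. Differentiating in `θ` and using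
`n × n = 0` and the triple product expansion `(v₀ × n) × n = ⟪n, v₀⟫ n - v₀` (as `‖n‖ = 1`)
shows `R' θ = R θ × n`. With `θ = b t / ε` and `B = b n`, the chain rule turns this into
`v' = (b / ε) (v × n) = (1 / ε) (v × B)`.
-/

open RealInnerProductSpace

/-- Three-dimensional cross product on `EuclideanSpace ℝ (Fin 3)`. -/
noncomputable def cross3 (u v : EuclideanSpace ℝ (Fin 3)) : EuclideanSpace ℝ (Fin 3) :=
  WithLp.toLp 2 (crossProduct (fun i => u i) (fun i => v i))

section Cross

variable (u v w : EuclideanSpace ℝ (Fin 3))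

lemma cross3_eq_toLp_crossProduct : cross3 u v = WithLp.toLp 2 (crossProduct u.ofLp v.ofLp) :=
  rfl

@[simp]
lemma cross3_self : cross3 u u = 0 := by
  simp [cross3_eq_toLp_crossProduct]

lemma cross3_add_left : cross3 (u + v) w = cross3 u w + cross3 v w := by
  simp [cross3_eq_toLp_crossProduct]

lemma cross3_smul_left (a : ℝ) : cross3 (a • u) v = a • cross3 u v := by
  simp [cross3_eq_toLp_crossProduct]

lemma cross3_smul_right (a : ℝ) : cross3 u (a • v) = a • cross3 u v := by
  simp [cross3_eq_toLp_crossProduct]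

lemma cross3_cross3 : cross3 (cross3 u v) w = ⟪u, w⟫ • v - ⟪v, w⟫ • u := by
  simp [cross3_eq_toLp_crossProduct, cross_cross_eq_smul_sub_smul,
    EuclideanSpace.inner_eq_star_dotProduct, dotProduct_comm]

end Cross

section Rodrigues

variable (n v₀ : EuclideanSpace ℝ (Fin 3))

/-- For a unit vector `n`, the rotation of `v₀` by the angle `-θ` about the axis `n`. -/
noncomputable def rodrigues (θ : ℝ) : EuclideanSpace ℝ (Fin 3) :=
  Real.cos θ • v₀ + (1 - Real.cos θ) • (⟪n, v₀⟫ • n) + Real.sin θ • cross3 v₀ n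

@[simp]
lemma rodrigues_zero : rodrigues n v₀ 0 = v₀ := by
  simp [rodrigues]

lemma hasDerivAt_rodrigues (θ : ℝ) :
    HasDerivAt (rodrigues n v₀)
      (-Real.sin θ • v₀ + Real.sin θ • (⟪n, v₀⟫ • n) + Real.cos θ • cross3 v₀ n) θ := by
  have hcos := Real.hasDerivAt_cos θ
  refine (((hcos.smul_const v₀).add ((hcos.const_sub 1).smul_const (⟪n, v₀⟫ • n))).add
    ((Real.hasDerivAt_sin θ).smul_const (cross3 v₀ n))).congr_deriv ?_
  simp

lemma cross3_rodrigues_of_norm_eq_one (hn : ‖n‖ = 1) (θ : ℝ) :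
    cross3 (rodrigues n v₀ θ) n =
      -Real.sin θ • v₀ + Real.sin θ • (⟪n, v₀⟫ • n) + Real.cos θ • cross3 v₀ n := by
  have hnn : ⟪n, n⟫ = 1 := by simp [hn]
  simp only [rodrigues, cross3_add_left, cross3_smul_left, cross3_self, cross3_cross3, hnn,
    real_inner_comm v₀ n]
  module

theorem hasDerivAt_rodrigues_of_norm_eq_one (hn : ‖n‖ = 1) (θ : ℝ) :
    HasDerivAt (rodrigues n v₀) (cross3 (rodrigues n v₀ θ) n) θ := by
  rw [cross3_rodrigues_of_norm_eq_one n v₀ hn]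
  exact hasDerivAt_rodrigues n v₀ θ

end Rodrigues

theorem rodrigues_formula_solves_stiff_part_general
    (B : EuclideanSpace ℝ (Fin 3)) (b : ℝ) (hb : 0 < b) (hB : ‖B‖ = b)
    (ε : ℝ) (v₀ : EuclideanSpace ℝ (Fin 3))
    (n : EuclideanSpace ℝ (Fin 3)) (hn : n = b⁻¹ • B)
    (v : ℝ → EuclideanSpace ℝ (Fin 3))
    (hv : ∀ t : ℝ, v t =
      Real.cos (b * t / ε) • v₀ + (1 - Real.cos (b * t / ε)) • (⟪n, v₀⟫ • n)
        + Real.sin (b * t / ε) • cross3 v₀ n) :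
    v 0 = v₀ ∧ ∀ t : ℝ, HasDerivAt v ((1 / ε) • cross3 (v t) B) t := by
  have hB_eq : B = b • n := by rw [hn, smul_inv_smul₀ hb.ne']
  have hn_norm : ‖n‖ = 1 := by
    rw [hn, norm_smul, hB, Real.norm_of_nonneg (inv_nonneg.2 hb.le), inv_mul_cancel₀ hb.ne']
  obtain rfl : v = fun t => rodrigues n v₀ (b * t / ε) := funext hv
  refine ⟨by simp, fun t => ?_⟩
  have hθ : HasDerivAt (fun t => b * t / ε) (b / ε) t := by
    simpa using ((hasDerivAt_id t).const_mul b).div_const ε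
  refine ((hasDerivAt_rodrigues_of_norm_eq_one n v₀ hn_norm _).scomp t hθ).congr_deriv ?_
  rw [hB_eq, cross3_smul_right, smul_smul, one_div_mul_eq_div]

/-- Rodrigues' formula solves the stiff part `v' = (1/ε) v × B` of the Vlasov
characteristics when `‖B‖ = b > 0`, with `n = B / b`. -/
theorem rodrigues_formula_solves_stiff_part
    (B : EuclideanSpace ℝ (Fin 3)) (b : ℝ) (hb : 0 < b) (hB : ‖B‖ = b)
    (ε : ℝ) (hε : 0 < ε) (v₀ : EuclideanSpace ℝ (Fin 3))
    (n : EuclideanSpace ℝ (Fin 3)) (hn : n = b⁻¹ • B)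
    (v : ℝ → EuclideanSpace ℝ (Fin 3))
    (hv : ∀ t : ℝ, v t =
      Real.cos (b * t / ε) • v₀ + (1 - Real.cos (b * t / ε)) • (⟪n, v₀⟫ • n)
        + Real.sin (b * t / ε) • cross3 v₀ n) :
    v 0 = v₀ ∧ ∀ t : ℝ, HasDerivAt v ((1 / ε) • cross3 (v t) B) t :=
  rodrigues_formula_solves_stiff_part_general B b hb hB ε v₀ n hn v hv
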